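/- arXiv:1409.3503 — 5 statements merged into one kernel-verified Lean document; each statement's English description precedes it below -/
import Mathlib

section
/- Let X be a circuit of a matroid M that is also a hyperplane (a flat of rank r(M) − 1). Then the collection ℬ' = ℬ ∪ {X}, where ℬ is the set of bases of M, is the set of bases of a matroid (the relaxation of M). -/
/-- Matroid rank function axioms on the finite ground set `E`. -/
def IsRankFn {α : Type*} [DecidableEq α] (E : Finset α) (r : Finset α → ℤ) : Prop :=
  (∀ S ⊆ E, 0 ≤ r S ∧ r S ≤ (S.card : ℤ)) ∧
  (∀ S U : Finset α, S ⊆ U → U ⊆ E → r S ≤ r U) ∧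
  (∀ S U : Finset α, S ⊆ E → U ⊆ E → r (S ∪ U) + r (S ∩ U) ≤ r S + r U)

/-- `B` is a basis of the matroid on `E` with rank function `r`. -/
def IsBasis {α : Type*} (E : Finset α) (r : Finset α → ℤ) (B : Finset α) : Prop :=
  B ⊆ E ∧ r B = (B.card : ℤ) ∧ r B = r E

/-- A nonempty collection of subsets satisfying the basis exchange axiom,
i.e. the set of bases of a matroid. -/
def IsBaseCollection {α : Type*} [DecidableEq α] (ℬ : Set (Finset α)) : Prop :=
  ℬ.Nonempty ∧
    ∀ B₁ ∈ ℬ, ∀ B₂ ∈ ℬ, ∀ i ∈ B₁ \ B₂,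
      ∃ j ∈ B₂ \ B₁, insert j (B₁.erase i) ∈ ℬ

section Aux

variable {α : Type*} [DecidableEq α] {E : Finset α} {r : Finset α → ℤ}

lemma span_le (hr2 : ∀ S U : Finset α, S ⊆ U → U ⊆ E → r S ≤ r U)
    (hr3 : ∀ S U : Finset α, S ⊆ E → U ⊆ E → r (S ∪ U) + r (S ∩ U) ≤ r S + r U)
    {I : Finset α} (hI : I ⊆ E) :
    ∀ S : Finset α, S ⊆ E → (∀ j ∈ S, r (insert j I) ≤ r I) → r (I ∪ S) ≤ r I := by
  intro S
  induction S using Finset.induction_on with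
  | empty => intro _ _; simp
  | @insert j S hjS ih =>
    intro hSE hj
    have hSE' : S ⊆ E := (Finset.subset_insert j S).trans hSE
    have hjE : j ∈ E := hSE (Finset.mem_insert_self _ _)
    have hS : r (I ∪ S) ≤ r I := ih hSE' fun k hk => hj k (Finset.mem_insert_of_mem hk)
    have hjIE : insert j I ⊆ E := Finset.insert_subset hjE hI
    have hsub := hr3 (I ∪ S) (insert j I) (Finset.union_subset hI hSE') hjIE
    have hunion : (I ∪ S) ∪ insert j I = I ∪ insert j S := by
      ext x
      simp only [Finset.mem_union, Finset.mem_insert]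
      tauto
    have hIle : r I ≤ r ((I ∪ S) ∩ insert j I) := by
      apply hr2
      · intro x hx
        exact Finset.mem_inter.mpr ⟨Finset.mem_union_left _ hx, Finset.mem_insert_of_mem hx⟩
      · exact (Finset.inter_subset_right).trans hjIE
    rw [hunion] at hsub
    have hjle := hj j (Finset.mem_insert_self _ _)
    linarith

lemma exists_insert_rank (hr2 : ∀ S U : Finset α, S ⊆ U → U ⊆ E → r S ≤ r U)
    (hr3 : ∀ S U : Finset α, S ⊆ E → U ⊆ E → r (S ∪ U) + r (S ∩ U) ≤ r S + r U)
    {I S : Finset α} (hI : I ⊆ E) (hS : S ⊆ E)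
    (h : r I < r (I ∪ S)) : ∃ j ∈ S, j ∉ I ∧ r I < r (insert j I) := by
  by_contra hcon
  push_neg at hcon
  have hall : ∀ j ∈ S, r (insert j I) ≤ r I := by
    intro j hj
    by_cases hjI : j ∈ I
    · simp [Finset.insert_eq_self.mpr hjI]
    · exact hcon j hj hjI
  exact absurd (span_le hr2 hr3 hI S hS hall) (not_le.mpr h)

lemma indep_subset (hr1 : ∀ S ⊆ E, 0 ≤ r S ∧ r S ≤ (S.card : ℤ))
    (hr3 : ∀ S U : Finset α, S ⊆ E → U ⊆ E → r (S ∪ U) + r (S ∩ U) ≤ r S + r U)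
    {I B : Finset α} (hIB : I ⊆ B) (hBE : B ⊆ E) (hB : r B = (B.card : ℤ)) :
    r I = (I.card : ℤ) := by
  have hIE : I ⊆ E := hIB.trans hBE
  have h1 := hr1 I hIE
  have h2 := hr1 (B \ I) ((Finset.sdiff_subset).trans hBE)
  have h3 := hr3 I (B \ I) hIE ((Finset.sdiff_subset).trans hBE)
  have hu : I ∪ (B \ I) = B := Finset.union_sdiff_of_subset hIB
  have hint : I ∩ (B \ I) = ∅ := Finset.inter_sdiff_self I B
  have h0 := hr1 ∅ (Finset.empty_subset E)
  have hcard : (B \ I).card = B.card - I.card := Finset.card_sdiff_of_subset hIB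
  have hle := Finset.card_le_card hIB
  rw [hu, hint] at h3
  omega

end Aux

/-- Relaxation of a circuit-hyperplane: if `X` is both a circuit (a minimal
dependent set) and a hyperplane (a flat of rank `r(E) - 1`) of the matroid `M`
on `E`, then adding `X` to the set of bases of `M` yields the set of bases of a
matroid. -/
theorem relaxation_is_matroid {α : Type*} [DecidableEq α] (E : Finset α)
    (r : Finset α → ℤ) (hr : IsRankFn E r) (X : Finset α) (hX : X ⊆ E)
    (hdep : r X < (X.card : ℤ))
    (hmin : ∀ Y : Finset α, Y ⊂ X → r Y = (Y.card : ℤ))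
    (hflat : ∀ j ∈ E, j ∉ X → r X < r (insert j X))
    (hrank : r X = r E - 1) :
    IsBaseCollection ({B | IsBasis E r B} ∪ {X}) := by
  obtain ⟨hr1, hr2, hr3⟩ := hr
  have hXne : X.Nonempty := by
    rcases X.eq_empty_or_nonempty with h | h
    · exfalso
      have h0 := (hr1 ∅ (Finset.empty_subset E)).1
      subst h
      simp at hdep
      omega
    · exact h
  obtain ⟨x₀, hx₀⟩ := hXne
  have hrX : r X = (X.card : ℤ) - 1 := by
    have h1 := hmin (X.erase x₀) (Finset.erase_ssubset hx₀)
    have h2 := hr2 (X.erase x₀) X (Finset.erase_subset _ _) hX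
    have h3 := Finset.card_erase_of_mem hx₀
    have h4 : 1 ≤ X.card := Finset.card_pos.mpr ⟨x₀, hx₀⟩
    omega
  have hXcard : (X.card : ℤ) = r E := by omega
  refine ⟨⟨X, Or.inr rfl⟩, ?_⟩
  intro B₁ hB₁ B₂ hB₂ i hi
  simp only [Set.mem_union, Set.mem_setOf_eq, Set.mem_singleton_iff] at hB₁ hB₂
  rw [Finset.mem_sdiff] at hi
  obtain ⟨hi1, hi2⟩ := hi
  simp only [Set.mem_union, Set.mem_setOf_eq, Set.mem_singleton_iff, Finset.mem_sdiff]
  rcases hB₁ with hB₁ | hB₁eq <;> rcases hB₂ with hB₂ | hB₂eq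
  · -- both bases of M
    obtain ⟨hB₁E, hB₁r, hB₁rE⟩ := hB₁
    obtain ⟨hB₂E, hB₂r, hB₂rE⟩ := hB₂
    set I := B₁.erase i with hIdef
    have hIB : I ⊆ B₁ := Finset.erase_subset _ _
    have hIE : I ⊆ E := hIB.trans hB₁E
    have hIind : r I = (I.card : ℤ) := indep_subset hr1 hr3 hIB hB₁E hB₁r
    have hc1 : I.card = B₁.card - 1 := Finset.card_erase_of_mem hi1
    have hc2 : 1 ≤ B₁.card := Finset.card_pos.mpr ⟨i, hi1⟩
    have hmono : r B₂ ≤ r (I ∪ B₂) :=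
      hr2 _ _ Finset.subset_union_right (Finset.union_subset hIE hB₂E)
    have hlt : r I < r (I ∪ B₂) := by omega
    obtain ⟨j, hjB₂, hjI, hjlt⟩ := exists_insert_rank hr2 hr3 hIE hB₂E hlt
    have hji : j ≠ i := fun h => hi2 (h ▸ hjB₂)
    have hjB₁ : j ∉ B₁ := fun h => hjI (Finset.mem_erase.mpr ⟨hji, h⟩)
    have hins : insert j I ⊆ E := Finset.insert_subset (hB₂E hjB₂) hIE
    have hcard : (insert j I).card = I.card + 1 := Finset.card_insert_of_notMem hjI
    have hub := (hr1 _ hins).2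
    exact ⟨j, ⟨hjB₂, hjB₁⟩, Or.inl ⟨hins, by omega, by omega⟩⟩
  · -- B₁ basis, B₂ = X
    rw [hB₂eq] at hi2
    obtain ⟨hB₁E, hB₁r, hB₁rE⟩ := hB₁
    set I := B₁.erase i with hIdef
    have hIB : I ⊆ B₁ := Finset.erase_subset _ _
    have hIE : I ⊆ E := hIB.trans hB₁E
    have hIind : r I = (I.card : ℤ) := indep_subset hr1 hr3 hIB hB₁E hB₁r
    have hc1 : I.card = B₁.card - 1 := Finset.card_erase_of_mem hi1
    have hc2 : 1 ≤ B₁.card := Finset.card_pos.mpr ⟨i, hi1⟩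
    by_cases hIX : I ⊆ X
    · have hXIcard : (X \ I).card = 1 := by
        have := Finset.card_sdiff_of_subset hIX
        have := Finset.card_le_card hIX
        omega
      obtain ⟨j, hj⟩ := Finset.card_eq_one.mp hXIcard
      have hjmem : j ∈ X \ I := hj ▸ Finset.mem_singleton_self j
      rw [Finset.mem_sdiff] at hjmem
      obtain ⟨hjX, hjI⟩ := hjmem
      have hji : j ≠ i := fun h => hi2 (h ▸ hjX)
      have hjB₁ : j ∉ B₁ := fun h => hjI (Finset.mem_erase.mpr ⟨hji, h⟩)
      have hins_eq : insert j I = X := by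
        apply Finset.eq_of_subset_of_card_le (Finset.insert_subset hjX hIX)
        rw [Finset.card_insert_of_notMem hjI]
        omega
      exact ⟨j, ⟨hB₂eq ▸ hjX, hjB₁⟩, Or.inr hins_eq⟩
    · obtain ⟨k, hkI, hkX⟩ := Finset.not_subset.mp hIX
      have hkE : k ∈ E := hIE hkI
      have h1 := hflat k hkE hkX
      have h2 : r (insert k X) ≤ r (I ∪ X) :=
        hr2 _ _ (Finset.insert_subset (Finset.mem_union_left _ hkI) Finset.subset_union_right)
          (Finset.union_subset hIE hX)
      have hlt : r I < r (I ∪ X) := by omega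
      obtain ⟨j, hjX, hjI, hjlt⟩ := exists_insert_rank hr2 hr3 hIE hX hlt
      have hji : j ≠ i := fun h => hi2 (h ▸ hjX)
      have hjB₁ : j ∉ B₁ := fun h => hjI (Finset.mem_erase.mpr ⟨hji, h⟩)
      have hins : insert j I ⊆ E := Finset.insert_subset (hX hjX) hIE
      have hcard : (insert j I).card = I.card + 1 := Finset.card_insert_of_notMem hjI
      have hub := (hr1 _ hins).2
      exact ⟨j, ⟨hB₂eq ▸ hjX, hjB₁⟩, Or.inl ⟨hins, by omega, by omega⟩⟩
  · -- B₁ = X, B₂ basis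
    rw [hB₁eq] at hi1 ⊢
    obtain ⟨hB₂E, hB₂r, hB₂rE⟩ := hB₂
    have hB₂X : ∃ j ∈ B₂, j ∉ X := by
      by_contra h
      push_neg at h
      have hle : r B₂ ≤ r X := hr2 _ _ h hX
      omega
    obtain ⟨j, hjB₂, hjX⟩ := hB₂X
    have hjE : j ∈ E := hB₂E hjB₂
    have h1 := hflat j hjE hjX
    have h2 : r (insert j X) ≤ r E := hr2 _ _ (Finset.insert_subset hjE hX) (subset_refl E)
    have hSE : insert j (X.erase i) ⊆ E := Finset.insert_subset hjE ((Finset.erase_subset _ _).trans hX)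
    have hunion : insert j (X.erase i) ∪ X = insert j X := by
      ext x
      simp only [Finset.mem_union, Finset.mem_insert, Finset.mem_erase]
      constructor
      · rintro ((h | ⟨_, h⟩) | h) <;> tauto
      · rintro (h | h)
        · tauto
        · by_cases hxi : x = i <;> tauto
    have hinter : insert j (X.erase i) ∩ X = X.erase i := by
      ext x
      simp only [Finset.mem_inter, Finset.mem_insert, Finset.mem_erase]
      have hxj : x = j → x ∉ X := fun h => h ▸ hjX
      tauto
    have hsub := hr3 (insert j (X.erase i)) X hSE hX
    rw [hunion, hinter] at hsub
    have herase := hmin (X.erase i) (Finset.erase_ssubset hi1)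
    have hc1 : (X.erase i).card = X.card - 1 := Finset.card_erase_of_mem hi1
    have hc2 : 1 ≤ X.card := Finset.card_pos.mpr ⟨i, hi1⟩
    have hjne : j ∉ X.erase i := fun h => hjX (Finset.mem_of_mem_erase h)
    have hScard : (insert j (X.erase i)).card = (X.erase i).card + 1 :=
      Finset.card_insert_of_notMem hjne
    have hub := (hr1 (insert j (X.erase i)) hSE).2
    exact ⟨j, ⟨hjB₂, hjX⟩, Or.inl ⟨hSE, by omega, by omega⟩⟩
  · rw [hB₁eq] at hi1; rw [hB₂eq] at hi2; exact absurd hi1 hi2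
end

section
/- Let P ⊆ ℝ^{n+1} be a polytope all of whose vertices are 0-1 characteristic vectors of (d+1)-element subsets of {0,…,n}, and suppose every edge of P is parallel to e_i − e_j for some i ≠ j. Then the collection ℬ of (d+1)-element sets B such that e_B is a vertex of P satisfies the basis exchange axiom, hence is the set of bases of a matroid. -/
/-!
Let `i ∈ B₁ \ B₂`. The linear functional with weight `-1` at `i`, `0` on the rest of `B₁ ∪ B₂`
and `-2` elsewhere takes the value `-1` at `e_{B₁}` and `0` at `e_{B₂}`, so, as in the simplex
method, some edge of `P` leaving the vertex `e_{B₁}` increases it. By hypothesis that edge ends at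
`e_{B'}` with `B' = B₁ - k + j`, `k ∈ B₁`, `j ∉ B₁`, and the weights only allow an increase when
`k = i` and `j ∈ B₂`.

An improving edge exists at every vertex `v` that does not maximize `f`: tilt `f` by a functional
`g` separating `v` from the other vertices just enough that `v` becomes a maximizer; the face where
the maximum is attained contains a second vertex, all of its vertices other than `v` beat `v`, and
any edge of that face at `v` will do. Edges at `v` exist whenever there is a second vertex, by
induction on the number of vertices: the same tilting, applied to a separator of the vertex
`u₁ ≠ v` maximizing `g`, gives a proper face through `v` and another vertex unless `v` and `u₁` are
the only vertices.
-/

/-- The 0-1 characteristic vector `e_B ∈ ℝ^{n+1}` of a subset `B`. -/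
def charVec {n : ℕ} (B : Finset (Fin (n + 1))) : Fin (n + 1) → ℝ :=
  fun a => if a ∈ B then 1 else 0

open Set

section Polytope

variable {E : Type*} [NormedAddCommGroup E] [NormedSpace ℝ E]

theorem IsExposed.eq_convexHull_inter {s B : Set E} (hs : s.Finite)
    (hB : IsExposed ℝ (convexHull ℝ s) B) : B = convexHull ℝ (s ∩ B) := by
  have hBconv : Convex ℝ B := hB.convex (convex_convexHull ℝ s)
  refine Subset.antisymm ?_ (convexHull_min (fun x hx => hx.2) hBconv)
  calc B = closure (convexHull ℝ (B.extremePoints ℝ)) :=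
        (closure_convexHull_extremePoints (hB.isCompact (hs.isCompact_convexHull ℝ)) hBconv).symm
    _ ⊆ convexHull ℝ (s ∩ B) := by
      refine closure_minimal (convexHull_mono ?_) ((hs.inter_of_left B).isClosed_convexHull ℝ)
      rw [hB.isExtreme.extremePoints_eq]
      exact fun x ⟨hxB, hx⟩ => ⟨extremePoints_convexHull_subset hx, hxB⟩

theorem isExposed_sep_eq_of_le {A : Set E} {h : E →L[ℝ] ℝ} {M : ℝ} (hM : ∀ x ∈ A, h x ≤ M) :
    IsExposed ℝ A {x ∈ A | h x = M} := by
  rintro ⟨x₀, hx₀A, hx₀⟩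
  refine ⟨h, Set.ext fun x => ⟨fun ⟨hxA, hx⟩ => ⟨hxA, fun y hy => hx ▸ hM y hy⟩, ?_⟩⟩
  exact fun ⟨hxA, hx⟩ => ⟨hxA, le_antisymm (hM x hxA) (hx₀ ▸ hx x₀ hx₀A)⟩

theorem isExtreme_convexHull_filter_eq {V : Finset E} {h : E →L[ℝ] ℝ} {M : ℝ}
    (hM : ∀ u ∈ V, h u ≤ M) :
    IsExtreme ℝ (convexHull ℝ ↑V) (convexHull ℝ (({x ∈ V | h x = M} : Finset E) : Set E)) := by
  have hexp : IsExposed ℝ (convexHull ℝ ↑V) {x ∈ convexHull ℝ ↑V | h x = M} :=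
    isExposed_sep_eq_of_le fun x hx =>
      convexHull_min hM (convex_halfSpace_le h.isLinear M) hx
  have hface : (({x ∈ V | h x = M} : Finset E) : Set E) =
      ↑V ∩ {x ∈ convexHull ℝ ↑V | h x = M} := by
    ext x
    simp only [Finset.coe_filter, mem_ofPred_eq, mem_inter_iff, Finset.mem_coe]
    exact ⟨fun hx => ⟨hx.1, subset_convexHull ℝ _ hx.1, hx.2⟩, fun hx => ⟨hx.1, hx.2.2⟩⟩
  rw [hface, ← hexp.eq_convexHull_inter V.finite_toSet]
  exact hexp.isExtreme

theorem exists_forall_lt_of_mem_extremePoints_convexHull {s : Set E} (hs : s.Finite) {x : E}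
    (hx : x ∈ (convexHull ℝ s).extremePoints ℝ) : ∃ g : E →L[ℝ] ℝ, ∀ y ∈ s, y ≠ x → g y < g x := by
  have hx' : x ∉ convexHull ℝ (s \ {x}) := fun hmem =>
    ((convex_convexHull ℝ s).mem_extremePoints_iff_mem_sdiff_convexHull_sdiff.1 hx).2
      (convexHull_mono (sdiff_subset_sdiff_left (subset_convexHull ℝ s)) hmem)
  obtain ⟨g, c, hlt, hc⟩ := geometric_hahn_banach_closed_point (convex_convexHull ℝ _)
    (hs.sdiff.isClosed_convexHull ℝ) hx'
  exact ⟨g, fun y hy hyx => (hlt y (subset_convexHull ℝ _ ⟨hy, hyx⟩)).trans hc⟩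

theorem subset_extremePoints_convexHull_of_subset {s t : Set E}
    (hs : s ⊆ (convexHull ℝ s).extremePoints ℝ) (hts : t ⊆ s) :
    t ⊆ (convexHull ℝ t).extremePoints ℝ := fun _ hx =>
  inter_extremePoints_subset_extremePoints_of_subset (convexHull_mono hts)
    ⟨subset_convexHull ℝ t hx, hs (hts hx)⟩

/-- `t` is the largest of the ratios `(f x - f v) / (g v - g x)`, the least tilt making `v` a
maximizer of `f + t • g` on `V`. -/
theorem exists_pos_tilt_of_lt {V : Finset E} {v u : E} {f g : E →L[ℝ] ℝ}
    (hg : ∀ x ∈ V, x ≠ v → g x < g v) (hu : u ∈ V) (hfu : f v < f u) :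
    ∃ t : ℝ, 0 < t ∧ (∀ x ∈ V, (f + t • g) x ≤ (f + t • g) v) ∧
      ∃ a ∈ V, a ≠ v ∧ (f + t • g) a = (f + t • g) v := by
  classical
  have huv : u ≠ v := by rintro rfl; exact hfu.false
  have hgap : ∀ x ∈ V.erase v, 0 < g v - g x := fun x hx =>
    sub_pos.2 (hg x (Finset.mem_of_mem_erase hx) (Finset.ne_of_mem_erase hx))
  set r : E → ℝ := fun x => (f x - f v) / (g v - g x)
  obtain ⟨a, ha, hmax⟩ :=
    Finset.exists_max_image (V.erase v) r ⟨u, Finset.mem_erase.2 ⟨huv, hu⟩⟩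
  refine ⟨r a, ?_, fun x hx => ?_, a, Finset.mem_of_mem_erase ha, Finset.ne_of_mem_erase ha, ?_⟩
  · have hu' : u ∈ V.erase v := Finset.mem_erase.2 ⟨huv, hu⟩
    exact (div_pos (sub_pos.2 hfu) (hgap u hu')).trans_le (hmax u hu')
  · rcases eq_or_ne x v with rfl | hxv
    · exact le_rfl
    have hx' : x ∈ V.erase v := Finset.mem_erase.2 ⟨hxv, hx⟩
    have := (div_le_iff₀ (hgap x hx')).1 (hmax x hx')
    simp only [add_apply, smul_apply, smul_eq_mul]
    linarith
  · have := div_mul_cancel₀ (f a - f v) (hgap a ha).ne'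
    simp only [add_apply, smul_apply, smul_eq_mul]
    linarith

theorem exists_isExtreme_segment {V : Finset E}
    (hV : (V : Set E) ⊆ (convexHull ℝ (V : Set E)).extremePoints ℝ) {v u : E}
    (hv : v ∈ V) (hu : u ∈ V) (huv : u ≠ v) :
    ∃ w ∈ V, w ≠ v ∧ IsExtreme ℝ (convexHull ℝ (V : Set E)) (segment ℝ v w) := by
  classical
  induction V using Finset.strongInduction generalizing u with
  | H V ih =>
  obtain ⟨g, hg⟩ := exists_forall_lt_of_mem_extremePoints_convexHull V.finite_toSet (hV hv)
  obtain ⟨u₁, hu₁, hmax⟩ :=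
    Finset.exists_max_image (V.erase v) g ⟨u, Finset.mem_erase.2 ⟨huv, hu⟩⟩
  obtain ⟨hu₁v, hu₁V⟩ := Finset.mem_erase.1 hu₁
  by_cases hV₂ : ∃ u₂ ∈ V, u₂ ≠ v ∧ u₂ ≠ u₁
  · obtain ⟨u₂, hu₂, hu₂v, hu₂u₁⟩ := hV₂
    obtain ⟨g₁, hg₁⟩ :=
      exists_forall_lt_of_mem_extremePoints_convexHull V.finite_toSet (hV hu₁V)
    obtain ⟨t, ht, hle, a, ha, hav, hat⟩ := exists_pos_tilt_of_lt hg hu₁V (hg₁ v hv hu₁v.symm)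
    set F : Finset E := {x ∈ V | (g₁ + t • g) x = (g₁ + t • g) v}
    -- `u₁` maximizes `g` off `v`, so the tilt cannot compensate the drop of `g₁` from `u₁` to `u₂`.
    have hFV : F ⊂ V := by
      refine (Finset.ssubset_iff_of_subset (Finset.filter_subset _ _)).2 ⟨u₂, hu₂, fun h => ?_⟩
      have h₂ := (Finset.mem_filter.1 h).2
      have h₁ := hle u₁ hu₁V
      simp only [add_apply, smul_apply, smul_eq_mul] at h₁ h₂
      nlinarith [hg₁ u₂ hu₂ hu₂u₁, hmax u₂ (Finset.mem_erase.2 ⟨hu₂v, hu₂⟩)]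
    obtain ⟨w, hwF, hwv, hw⟩ := ih F hFV (subset_extremePoints_convexHull_of_subset hV
      (Finset.coe_subset.2 (Finset.filter_subset _ _)))
      (Finset.mem_filter.2 ⟨hv, rfl⟩) (Finset.mem_filter.2 ⟨ha, hat⟩) hav
    exact ⟨w, Finset.mem_of_mem_filter _ hwF, hwv, (isExtreme_convexHull_filter_eq hle).trans hw⟩
  · push Not at hV₂
    have hpair : (V : Set E) = {v, u₁} := by
      ext x
      simp only [Finset.mem_coe, mem_insert_iff, mem_singleton_iff]
      refine ⟨fun hx => or_iff_not_imp_left.2 (hV₂ x hx), ?_⟩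
      rintro (rfl | rfl) <;> assumption
    exact ⟨u₁, hu₁V, hu₁v, by rw [hpair, convexHull_pair]⟩

theorem exists_isExtreme_segment_lt {V : Finset E}
    (hV : (V : Set E) ⊆ (convexHull ℝ (V : Set E)).extremePoints ℝ) {v u : E}
    (hv : v ∈ V) (hu : u ∈ V) {f : E →L[ℝ] ℝ} (hfu : f v < f u) :
    ∃ w ∈ V, f v < f w ∧ IsExtreme ℝ (convexHull ℝ (V : Set E)) (segment ℝ v w) := by
  obtain ⟨g, hg⟩ := exists_forall_lt_of_mem_extremePoints_convexHull V.finite_toSet (hV hv)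
  obtain ⟨t, ht, hle, a, ha, hav, hat⟩ := exists_pos_tilt_of_lt hg hu hfu
  set F : Finset E := {x ∈ V | (f + t • g) x = (f + t • g) v}
  obtain ⟨w, hwF, hwv, hw⟩ := exists_isExtreme_segment (V := F)
    (subset_extremePoints_convexHull_of_subset hV (Finset.coe_subset.2 (Finset.filter_subset _ _)))
    (Finset.mem_filter.2 ⟨hv, rfl⟩) (Finset.mem_filter.2 ⟨ha, hat⟩) hav
  obtain ⟨hwV, hwt⟩ := Finset.mem_filter.1 hwF
  refine ⟨w, hwV, ?_, (isExtreme_convexHull_filter_eq hle).trans hw⟩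
  simp only [add_apply, smul_apply, smul_eq_mul] at hwt
  nlinarith [hg w hwV hwv]

end Polytope

theorem Finset.sum_insert_erase {α M : Type*} [DecidableEq α] [AddCommGroup M] {s : Finset α}
    {j k : α} (hj : j ∉ s) (hk : k ∈ s) (w : α → M) :
    ∑ a ∈ insert j (s.erase k), w a = ∑ a ∈ s, w a + w j - w k := by
  rw [Finset.sum_insert fun h => hj (Finset.mem_of_mem_erase h), Finset.sum_erase_eq_sub hk]
  abel

theorem sum_smul_proj_charVec {n : ℕ} (w : Fin (n + 1) → ℝ) (B : Finset (Fin (n + 1))) :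
    (∑ a, w a • ContinuousLinearMap.proj a : (Fin (n + 1) → ℝ) →L[ℝ] ℝ) (charVec B) =
      ∑ a ∈ B, w a := by
  simp [charVec, Finset.sum_ite_mem]

theorem mem_and_notMem_of_charVec_sub_pos {n : ℕ} {B₁ B₂ : Finset (Fin (n + 1))}
    {a : Fin (n + 1)} (h : 0 < charVec B₂ a - charVec B₁ a) : a ∈ B₂ ∧ a ∉ B₁ := by
  unfold charVec at h
  split_ifs at h with h₂ h₁ <;> first | exact ⟨h₂, h₁⟩ | norm_num at h

theorem mem_iff_of_charVec_sub_eq_zero {n : ℕ} {B₁ B₂ : Finset (Fin (n + 1))}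
    {a : Fin (n + 1)} (h : charVec B₂ a - charVec B₁ a = 0) : a ∈ B₂ ↔ a ∈ B₁ := by
  unfold charVec at h
  split_ifs at h <;> simp_all

theorem exists_eq_insert_erase_of_charVec_sub_eq_smul {n : ℕ} {B₁ B₂ : Finset (Fin (n + 1))}
    {p q : Fin (n + 1)} {c : ℝ} (hB : B₁ ≠ B₂) (hpq : p ≠ q)
    (h : charVec B₂ - charVec B₁ = c • (Pi.single p (1 : ℝ) - Pi.single q 1)) :
    ∃ j ∉ B₁, ∃ k ∈ B₁, B₂ = insert j (B₁.erase k) := by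
  wlog hc : 0 < c generalizing p q c
  · rcases (not_lt.1 hc).lt_or_eq with hc | rfl
    · refine this hpq.symm (c := -c) ?_ (neg_pos.2 hc)
      rw [h, neg_smul, ← smul_neg, neg_sub]
    · refine absurd (Finset.ext fun a => (mem_iff_of_charVec_sub_eq_zero ?_).symm) hB
      simpa using congrFun h a
  have hdiff (a : Fin (n + 1)) := congrFun h a
  have hp : charVec B₂ p - charVec B₁ p = c := by simpa [Pi.single_apply, hpq] using hdiff p
  have hq : charVec B₂ q - charVec B₁ q = -c := by
    simpa [Pi.single_apply, hpq.symm] using hdiff q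
  obtain ⟨hpB₂, hpB₁⟩ := mem_and_notMem_of_charVec_sub_pos (hp ▸ hc)
  obtain ⟨hqB₁, hqB₂⟩ :=
    mem_and_notMem_of_charVec_sub_pos (by linarith : 0 < charVec B₁ q - charVec B₂ q)
  refine ⟨p, hpB₁, q, hqB₁, Finset.ext fun a => ?_⟩
  rcases eq_or_ne a p with rfl | hap
  · simpa using hpB₂
  rcases eq_or_ne a q with rfl | haq
  · simpa [hap] using hqB₂
  have ha : charVec B₂ a - charVec B₁ a = 0 := by simpa [Pi.single_apply, hap, haq] using hdiff a
  simpa [hap, haq] using mem_iff_of_charVec_sub_eq_zero ha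

section ExchangeWeight

variable {α : Type*} [DecidableEq α] (B₁ B₂ : Finset α) (i : α)

def exchangeWeight (a : α) : ℝ :=
  if a = i then -1 else if a ∈ B₁ ∪ B₂ then 0 else -2

variable {B₁ B₂ i}

theorem sum_exchangeWeight_left (hi : i ∈ B₁) : ∑ a ∈ B₁, exchangeWeight B₁ B₂ i a = -1 := by
  rw [← Finset.add_sum_erase _ _ hi, Finset.sum_eq_zero fun a ha => ?_]
  · simp [exchangeWeight]
  · simp [exchangeWeight, Finset.ne_of_mem_erase ha, Finset.mem_of_mem_erase ha]

theorem sum_exchangeWeight_right (hi : i ∉ B₂) : ∑ a ∈ B₂, exchangeWeight B₁ B₂ i a = 0 :=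
  Finset.sum_eq_zero fun a ha => by simp [exchangeWeight, ha, ne_of_mem_of_not_mem ha hi]

theorem eq_and_mem_of_exchangeWeight_lt {j k : α} (hj : j ∉ B₁) (hk : k ∈ B₁)
    (h : exchangeWeight B₁ B₂ i k < exchangeWeight B₁ B₂ i j) : k = i ∧ j ∈ B₂ := by
  unfold exchangeWeight at h
  split_ifs at h <;> simp_all <;> norm_num at h

end ExchangeWeight

theorem matroid_polytope_gives_matroid_general (n : ℕ)
    (ℬ : Set (Finset (Fin (n + 1))))
    (hvert : ∀ B ∈ ℬ, charVec B ∈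
      Set.extremePoints ℝ (convexHull ℝ {x | ∃ B' ∈ ℬ, x = charVec B'}))
    (hedge : ∀ B₁ ∈ ℬ, ∀ B₂ ∈ ℬ, B₁ ≠ B₂ →
      IsExtreme ℝ (convexHull ℝ {x | ∃ B' ∈ ℬ, x = charVec B'})
        (segment ℝ (charVec B₁) (charVec B₂)) →
      ∃ i j : Fin (n + 1), i ≠ j ∧
        ∃ c : ℝ, charVec B₂ - charVec B₁ = c • (Pi.single i (1 : ℝ) - Pi.single j 1)) :
    ∀ B₁ ∈ ℬ, ∀ B₂ ∈ ℬ, ∀ i ∈ B₁ \ B₂,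
      ∃ j ∈ B₂ \ B₁, insert j (B₁.erase i) ∈ ℬ := by
  intro B₁ hB₁ B₂ hB₂ i hi
  obtain ⟨hiB₁, hiB₂⟩ := Finset.mem_sdiff.1 hi
  set S : Set (Fin (n + 1) → ℝ) := {x | ∃ B' ∈ ℬ, x = charVec B'}
  have hS : S.Finite := (ℬ.toFinite.image charVec).subset fun x ⟨B, hB, hx⟩ => ⟨B, hB, hx.symm⟩
  have hSext : S ⊆ (convexHull ℝ S).extremePoints ℝ := by
    rintro _ ⟨B, hB, rfl⟩
    exact hvert B hB
  set f : (Fin (n + 1) → ℝ) →L[ℝ] ℝ := ∑ a, exchangeWeight B₁ B₂ i a • ContinuousLinearMap.proj a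
  obtain ⟨x, hxS, hlt, hx⟩ := exists_isExtreme_segment_lt (V := hS.toFinset) (f := f)
    (by simpa using hSext) (by simpa using ⟨B₁, hB₁, rfl⟩) (by simpa using ⟨B₂, hB₂, rfl⟩)
    (by simp only [f, sum_smul_proj_charVec, sum_exchangeWeight_left hiB₁,
      sum_exchangeWeight_right hiB₂]; norm_num)
  obtain ⟨B', hB', rfl⟩ := hS.mem_toFinset.1 hxS
  have hne : B₁ ≠ B' := by rintro rfl; exact hlt.false
  obtain ⟨p, q, hpq, c, hc⟩ := hedge B₁ hB₁ B' hB' hne (by simpa using hx)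
  obtain ⟨j, hj, k, hk, rfl⟩ := exists_eq_insert_erase_of_charVec_sub_eq_smul hne hpq hc
  simp only [f, sum_smul_proj_charVec, Finset.sum_insert_erase hj hk] at hlt
  obtain ⟨rfl, hjB₂⟩ := eq_and_mem_of_exchangeWeight_lt hj hk (by linarith)
  exact ⟨j, Finset.mem_sdiff.2 ⟨hjB₂, hj⟩, hB'⟩

/-- If `P ⊆ ℝ^{n+1}` is the polytope whose vertices are the characteristic vectors
`e_B` of the `(d+1)`-element sets `B ∈ ℬ`, and every edge of `P` (extreme segment
between two vertices) is parallel to `e_i - e_j` for some `i ≠ j`, then `ℬ`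
satisfies the basis exchange axiom, hence is the set of bases of a matroid. -/
theorem matroid_polytope_gives_matroid (n d : ℕ)
    (ℬ : Set (Finset (Fin (n + 1)))) (hne : ℬ.Nonempty)
    (hcard : ∀ B ∈ ℬ, B.card = d + 1)
    (hvert : ∀ B ∈ ℬ, charVec B ∈
      Set.extremePoints ℝ (convexHull ℝ {x | ∃ B' ∈ ℬ, x = charVec B'}))
    (hedge : ∀ B₁ ∈ ℬ, ∀ B₂ ∈ ℬ, B₁ ≠ B₂ →
      IsExtreme ℝ (convexHull ℝ {x | ∃ B' ∈ ℬ, x = charVec B'})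
        (segment ℝ (charVec B₁) (charVec B₂)) →
      ∃ i j : Fin (n + 1), i ≠ j ∧
        ∃ c : ℝ, charVec B₂ - charVec B₁ = c • (Pi.single i (1 : ℝ) - Pi.single j 1)) :
    ∀ B₁ ∈ ℬ, ∀ B₂ ∈ ℬ, ∀ i ∈ B₁ \ B₂,
      ∃ j ∈ B₂ \ B₁, insert j (B₁.erase i) ∈ ℬ :=
  matroid_polytope_gives_matroid_general n ℬ hvert hedge
end

section
/- Let w ∈ ℝ^E and let M be a matroid on E. The set of bases of M of minimal w-weight (where the w-weight of B is Σ_{i∈B} w_i) is the set of bases of a matroid M_w; moreover, if ∅ = S₀ ⊊ S₁ ⊊ … ⊊ S_{k+1} = E is the flag of subsets on which w takes its distinct values in increasing order (w constant on each S_i \ S_{i−1}), then M_w = ⊕_{i=1}^{k+1} (M|_{S_i})/S_{i−1}. -/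
namespace MWAux

variable {α : Type*} [DecidableEq α]

lemma rank_empty {E : Finset α} {r : Finset α → ℤ} (hr : IsRankFn E r) : r ∅ = 0 := by
  have h := hr.1 ∅ (Finset.empty_subset E)
  simp at h
  omega

lemma indep_subset {E : Finset α} {r : Finset α → ℤ} (hr : IsRankFn E r)
    {B A : Finset α} (hBE : B ⊆ E) (hB : r B = B.card) (hAB : A ⊆ B) :
    r A = A.card := by
  have hAE : A ⊆ E := hAB.trans hBE
  have h1 : r A ≤ A.card := (hr.1 A hAE).2
  have hsub := hr.2.2 A (B \ A) hAE (Finset.sdiff_subset.trans hBE)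
  rw [Finset.union_sdiff_of_subset hAB, Finset.inter_sdiff_self, rank_empty hr] at hsub
  have h2 : r (B \ A) ≤ ((B \ A).card : ℤ) := (hr.1 _ (Finset.sdiff_subset.trans hBE)).2
  have h3 : (B \ A).card = B.card - A.card := Finset.card_sdiff_of_subset hAB
  have h4 : A.card ≤ B.card := Finset.card_le_card hAB
  rw [h3] at h2
  have h5 : ((B.card - A.card : ℕ) : ℤ) = (B.card : ℤ) - A.card := by
    push_cast [Nat.cast_sub h4]; ring
  rw [h5] at h2
  omega

lemma span_le {E : Finset α} {r : Finset α → ℤ} (hr : IsRankFn E r)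
    {X : Finset α} (hXE : X ⊆ E) :
    ∀ Y : Finset α, Y ⊆ E → (∀ j ∈ Y, r (insert j X) ≤ r X) → r (X ∪ Y) ≤ r X := by
  intro Y
  induction Y using Finset.induction_on with
  | empty => intro _ _; simp
  | @insert a Z ha ih =>
    intro hYE h
    have hZE : Z ⊆ E := (Finset.subset_insert a Z).trans hYE
    have ihZ : r (X ∪ Z) ≤ r X := ih hZE (fun j hj => h j (Finset.mem_insert_of_mem hj))
    have haE : a ∈ E := hYE (Finset.mem_insert_self a Z)
    have hu : (X ∪ Z) ∪ insert a X = X ∪ insert a Z := by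
      ext x; simp only [Finset.mem_union, Finset.mem_insert]; tauto
    have hXi : X ⊆ (X ∪ Z) ∩ insert a X :=
      Finset.subset_inter Finset.subset_union_left (Finset.subset_insert a X)
    have hiE : (X ∪ Z) ∩ insert a X ⊆ E :=
      Finset.inter_subset_right.trans (Finset.insert_subset haE hXE)
    have hmono := hr.2.1 X ((X ∪ Z) ∩ insert a X) hXi hiE
    have hsub := hr.2.2 (X ∪ Z) (insert a X) (Finset.union_subset hXE hZE)
      (Finset.insert_subset haE hXE)
    rw [hu] at hsub
    have := h a (Finset.mem_insert_self a Z)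
    linarith

lemma rank_union_congr {E : Finset α} {r : Finset α → ℤ} (hr : IsRankFn E r)
    {X F T : Finset α} (hXF : X ⊆ F) (hFE : F ⊆ E) (hTE : T ⊆ E)
    (hX : r X = r F) : r (T ∪ X) = r (T ∪ F) := by
  have hle : r (T ∪ X) ≤ r (T ∪ F) :=
    hr.2.1 _ _ (Finset.union_subset_union_right hXF) (Finset.union_subset hTE hFE)
  have hu : (T ∪ X) ∪ F = T ∪ F := by
    ext x; simp only [Finset.mem_union]; tauto
  have hXi : X ⊆ (T ∪ X) ∩ F := Finset.subset_inter (Finset.subset_union_right) hXF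
  have hmono := hr.2.1 X ((T ∪ X) ∩ F) hXi (Finset.inter_subset_right.trans hFE)
  have hsub := hr.2.2 (T ∪ X) F (Finset.union_subset hTE (hXF.trans hFE)) hFE
  rw [hu] at hsub
  omega

lemma exists_basis {E : Finset α} {r : Finset α → ℤ} (hr : IsRankFn E r) :
    ∃ B, IsBasis E r B := by
  classical
  obtain ⟨B, hBmem, hBmax⟩ := (E.powerset.filter (fun B => r B = B.card)).exists_max_image
    Finset.card ⟨∅, by simp [rank_empty hr]⟩
  simp only [Finset.mem_filter, Finset.mem_powerset] at hBmem
  obtain ⟨hBE, hBr⟩ := hBmem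
  refine ⟨B, hBE, hBr, ?_⟩
  by_contra hne
  have hlt : r B < r E := lt_of_le_of_ne (hr.2.1 B E hBE subset_rfl) hne
  have : ¬ ∀ j ∈ E, r (insert j B) ≤ r B := by
    intro hall
    have := span_le hr hBE E subset_rfl hall
    rw [Finset.union_eq_right.mpr hBE] at this
    omega
  push_neg at this
  obtain ⟨j, hjE, hjr⟩ := this
  have hjB : j ∉ B := by
    intro hjB; rw [Finset.insert_eq_self.mpr hjB] at hjr; omega
  have hcard : (insert j B).card = B.card + 1 := Finset.card_insert_of_notMem hjB
  have hub : r (insert j B) ≤ ((insert j B).card : ℤ) :=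
    (hr.1 _ (Finset.insert_subset hjE hBE)).2
  have heq : r (insert j B) = ((insert j B).card : ℤ) := by
    rw [hcard] at hub ⊢; push_cast at hub ⊢; omega
  have := hBmax (insert j B) (by
    simp only [Finset.mem_filter, Finset.mem_powerset]
    exact ⟨Finset.insert_subset hjE hBE, heq⟩)
  omega

lemma basis_exchange {E : Finset α} {r : Finset α → ℤ} (hr : IsRankFn E r) {B₁ B₂ : Finset α}
    (h₁ : IsBasis E r B₁) (h₂ : IsBasis E r B₂) {i : α} (hi : i ∈ B₁ \ B₂) :
    ∃ j ∈ B₂ \ B₁, IsBasis E r (insert j (B₁.erase i)) := by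
  classical
  obtain ⟨hiB₁, hiB₂⟩ := Finset.mem_sdiff.mp hi
  obtain ⟨hB₁E, hB₁r, hB₁rE⟩ := h₁
  obtain ⟨hB₂E, hB₂r, hB₂rE⟩ := h₂
  set A := B₁.erase i with hA
  have hAB₁ : A ⊆ B₁ := Finset.erase_subset i B₁
  have hAE : A ⊆ E := hAB₁.trans hB₁E
  have hAr : r A = A.card := indep_subset hr hB₁E hB₁r hAB₁
  have hAcard : A.card = B₁.card - 1 := Finset.card_erase_of_mem hiB₁
  have hB₁pos : 1 ≤ B₁.card := Finset.card_pos.mpr ⟨i, hiB₁⟩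
  have hAcard' : (A.card : ℤ) = (B₁.card : ℤ) - 1 := by
    rw [hAcard]; push_cast [Nat.cast_sub hB₁pos]; ring
  have hex : ∃ j ∈ B₂, r A < r (insert j A) := by
    by_contra hall
    push_neg at hall
    have := span_le hr hAE B₂ hB₂E hall
    have hmono := hr.2.1 B₂ (A ∪ B₂) Finset.subset_union_right
      (Finset.union_subset hAE hB₂E)
    omega
  obtain ⟨j, hjB₂, hjr⟩ := hex
  have hji : j ≠ i := fun h => hiB₂ (h ▸ hjB₂)
  have hjB₁ : j ∉ B₁ := by
    intro hjB₁
    have hjA : j ∈ A := Finset.mem_erase.mpr ⟨hji, hjB₁⟩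
    rw [Finset.insert_eq_self.mpr hjA] at hjr; omega
  have hjA : j ∉ A := fun h => hjB₁ (hAB₁ h)
  have hcard : (insert j A).card = A.card + 1 := Finset.card_insert_of_notMem hjA
  have hjE : j ∈ E := hB₂E hjB₂
  have hsubE : insert j A ⊆ E := Finset.insert_subset hjE hAE
  have hub : r (insert j A) ≤ ((insert j A).card : ℤ) := (hr.1 _ hsubE).2
  refine ⟨j, Finset.mem_sdiff.mpr ⟨hjB₂, hjB₁⟩, hsubE, ?_, ?_⟩
  · rw [hcard]; push_cast; rw [hcard] at hub; push_cast at hub; omega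
  · rw [hcard] at hub; push_cast at hub; omega

lemma minor_rankFn {E : Finset α} {r : Finset α → ℤ} (hr : IsRankFn E r)
    {F D : Finset α} (hF : F ⊆ E) (hD : D ⊆ E) :
    IsRankFn D (fun T => r (T ∪ F) - r F) := by
  refine ⟨?_, ?_, ?_⟩
  · intro T hT
    have hTE : T ⊆ E := hT.trans hD
    have h1 : r F ≤ r (T ∪ F) := hr.2.1 F (T ∪ F) Finset.subset_union_right
      (Finset.union_subset hTE hF)
    have hsub := hr.2.2 T F hTE hF
    have h2 : 0 ≤ r (T ∩ F) := (hr.1 _ (Finset.inter_subset_right.trans hF)).1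
    have h3 : r T ≤ (T.card : ℤ) := (hr.1 T hTE).2
    dsimp only
    constructor
    · omega
    · linarith
  · intro T U hTU hUD
    have := hr.2.1 (T ∪ F) (U ∪ F) (Finset.union_subset_union_left hTU)
      (Finset.union_subset (hUD.trans hD) hF)
    dsimp only
    omega
  · intro T U hTD hUD
    have hsub := hr.2.2 (T ∪ F) (U ∪ F) (Finset.union_subset (hTD.trans hD) hF)
      (Finset.union_subset (hUD.trans hD) hF)
    have h1 : (T ∪ F) ∪ (U ∪ F) = (T ∪ U) ∪ F := by
      ext x; simp only [Finset.mem_union]; tauto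
    have h2 : (T ∪ F) ∩ (U ∪ F) = (T ∩ U) ∪ F := by
      ext x; simp only [Finset.mem_union, Finset.mem_inter]; tauto
    rw [h1, h2] at hsub
    dsimp only
    omega

lemma abel_sum (c h : ℕ → ℝ) (n : ℕ) :
    ∑ i ∈ Finset.range n, c i * (h i - h (i+1)) =
      c 0 * h 0 - c n * h n + ∑ i ∈ Finset.range n, (c (i+1) - c i) * h (i+1) := by
  induction n with
  | zero => simp
  | succ m ih => rw [Finset.sum_range_succ, Finset.sum_range_succ, ih]; ring

end MWAux

/-- Let `w ∈ ℝ^E` and let `∅ = S 0 ⊊ S 1 ⊊ ⋯ ⊊ S (k+1) = E` be the flag on which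
`w` takes its distinct values `c 0 < c 1 < ⋯ < c k` (with `w = c i` on
`S (i+1) \ S i`).  Then the bases of `M` of minimal `w`-weight form the set of
bases of a matroid `M_w`, and `M_w = ⊕ᵢ (M|_{S (i+1)})/S i`: a subset `B ⊆ E` is a
minimal-weight basis iff for each `i ≤ k`, `B ∩ (S (i+1) \ S i)` is a basis of the
minor `(M|_{S (i+1)})/S i`, whose rank function is `T ↦ r(T ∪ S i) - r(S i)`. -/
theorem min_weight_bases_matroid {α : Type*} [DecidableEq α] (E : Finset α)
    (r : Finset α → ℤ) (hr : IsRankFn E r) (w : α → ℝ) (k : ℕ)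
    (S : ℕ → Finset α) (c : ℕ → ℝ)
    (hS0 : S 0 = ∅) (hStop : S (k + 1) = E)
    (hmono : ∀ i ≤ k, S i ⊂ S (i + 1))
    (hw : ∀ i ≤ k, ∀ x ∈ S (i + 1) \ S i, w x = c i)
    (hc : ∀ i < k, c i < c (i + 1)) :
    IsBaseCollection
        {B | IsBasis E r B ∧ ∀ B', IsBasis E r B' → ∑ x ∈ B, w x ≤ ∑ x ∈ B', w x} ∧
      ∀ B ⊆ E,
        ((IsBasis E r B ∧ ∀ B', IsBasis E r B' → ∑ x ∈ B, w x ≤ ∑ x ∈ B', w x) ↔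
          ∀ i ≤ k,
            IsBasis (S (i + 1) \ S i) (fun T => r (T ∪ S i) - r (S i))
              (B ∩ (S (i + 1) \ S i))) := by

  classical
  -- chain of subsets
  have hchain : ∀ j, j ≤ k + 1 → ∀ i, i ≤ j → S i ⊆ S j := by
    intro j
    induction j with
    | zero =>
      intro _ i hi
      obtain rfl : i = 0 := Nat.le_zero.mp hi
      exact subset_rfl
    | succ m ih =>
      intro hm i hi
      rcases Nat.eq_or_lt_of_le hi with h | h
      · exact h ▸ subset_rfl
      · exact (ih (by omega) i (by omega)).trans (hmono m (by omega)).subset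
  have hSE : ∀ i, i ≤ k + 1 → S i ⊆ E := fun i hi => hStop ▸ hchain (k+1) le_rfl i hi
  have hDE : ∀ i, i ≤ k → S (i+1) \ S i ⊆ E :=
    fun i hi => Finset.sdiff_subset.trans (hSE (i+1) (by omega))
  have hDu : ∀ i, i ≤ k → (S (i+1) \ S i) ∪ S i = S (i+1) :=
    fun i hi => Finset.sdiff_union_of_subset (hchain (i+1) (by omega) i (by omega))
  have hcover : ∀ j, j ≤ k + 1 → ∀ x ∈ S j, ∃ i ≤ k, x ∈ S (i+1) \ S i := by
    intro j
    induction j with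
    | zero => intro _ x hx; rw [hS0] at hx; simp at hx
    | succ m ih =>
      intro hm x hx
      by_cases hxm : x ∈ S m
      · exact ih (by omega) x hxm
      · exact ⟨m, by omega, Finset.mem_sdiff.mpr ⟨hx, hxm⟩⟩
  have hdisj : ∀ i j, i ≤ k → j ≤ k → i ≠ j →
      ∀ x, x ∈ S (i+1) \ S i → x ∉ S (j+1) \ S j := by
    intro i j hi hj hne x hxi hxj
    rcases Nat.lt_or_ge i j with h | h
    · exact (Finset.mem_sdiff.mp hxj).2
        (hchain j (by omega) (i+1) (by omega) (Finset.mem_sdiff.mp hxi).1)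
    · have hji : j < i := lt_of_le_of_ne h (Ne.symm hne)
      exact (Finset.mem_sdiff.mp hxi).2
        (hchain i (by omega) (j+1) (by omega) (Finset.mem_sdiff.mp hxj).1)
  -- Step A: if each piece is a basis of the minor, the partial intersections have full rank
  have stepA : ∀ B, B ⊆ E →
      (∀ i ≤ k, IsBasis (S (i+1) \ S i) (fun T => r (T ∪ S i) - r (S i))
        (B ∩ (S (i+1) \ S i))) →
      ∀ i, i ≤ k + 1 →
        r (B ∩ S i) = ((B ∩ S i).card : ℤ) ∧ ((B ∩ S i).card : ℤ) = r (S i) := by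
    intro B hBE hC i
    induction i with
    | zero => intro _; rw [hS0]; simp [MWAux.rank_empty hr]
    | succ m ih =>
      intro hm
      have hmk : m ≤ k := by omega
      obtain ⟨h1, h2⟩ := ih (by omega)
      obtain ⟨hsub, hcard, hrk⟩ := hC m hmk
      have hcard' : r ((B ∩ (S (m+1) \ S m)) ∪ S m) - r (S m)
          = ((B ∩ (S (m+1) \ S m)).card : ℤ) := hcard
      have hrk' : r ((B ∩ (S (m+1) \ S m)) ∪ S m) - r (S m)
          = r ((S (m+1) \ S m) ∪ S m) - r (S m) := hrk
      rw [hDu m hmk] at hrk'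
      have hX : r (B ∩ S m) = r (S m) := h1.trans h2
      have hkey : r ((B ∩ (S (m+1) \ S m)) ∪ (B ∩ S m))
          = r ((B ∩ (S (m+1) \ S m)) ∪ S m) :=
        MWAux.rank_union_congr hr Finset.inter_subset_right (hSE m (by omega))
          (Finset.inter_subset_right.trans (hDE m hmk)) hX
      have hset : (B ∩ (S (m+1) \ S m)) ∪ (B ∩ S m) = B ∩ S (m+1) := by
        rw [← Finset.inter_union_distrib_left, hDu m hmk]
      rw [hset] at hkey
      have hdisjc : Disjoint (B ∩ (S (m+1) \ S m)) (B ∩ S m) := by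
        apply Finset.disjoint_left.mpr
        intro x hx hx'
        exact (Finset.mem_sdiff.mp (Finset.mem_inter.mp hx).2).2 (Finset.mem_inter.mp hx').2
      have hcardeq : (B ∩ S (m+1)).card
          = (B ∩ (S (m+1) \ S m)).card + (B ∩ S m).card := by
        rw [← hset]; exact Finset.card_union_of_disjoint hdisjc
      have hc1 : ((B ∩ S (m+1)).card : ℤ)
          = ((B ∩ (S (m+1) \ S m)).card : ℤ) + ((B ∩ S m).card : ℤ) := by
        exact_mod_cast hcardeq
      constructor <;> omega
  -- a set satisfying the condition is a basis
  have stepBasis : ∀ B, B ⊆ E →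
      (∀ i ≤ k, IsBasis (S (i+1) \ S i) (fun T => r (T ∪ S i) - r (S i))
        (B ∩ (S (i+1) \ S i))) → IsBasis E r B := by
    intro B hBE hC
    obtain ⟨h1, h2⟩ := stepA B hBE hC (k+1) le_rfl
    rw [hStop] at h1 h2
    rw [Finset.inter_eq_left.mpr hBE] at h1 h2
    exact ⟨hBE, h1, h1.trans h2⟩
  -- Step B: weight formula
  have stepB : ∀ B, B ⊆ E → ∑ x ∈ B, w x =
      ∑ i ∈ Finset.range (k+1),
        c i * (((B ∩ S (i+1)).card : ℝ) - ((B ∩ S i).card : ℝ)) := by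
    intro B hBE
    have hBu : B = (Finset.range (k+1)).biUnion (fun i => B ∩ (S (i+1) \ S i)) := by
      ext x
      simp only [Finset.mem_biUnion, Finset.mem_range, Finset.mem_inter]
      constructor
      · intro hx
        obtain ⟨i, hik, hxi⟩ := hcover (k+1) le_rfl x (by rw [hStop]; exact hBE hx)
        exact ⟨i, by omega, hx, hxi⟩
      · rintro ⟨i, _, hx, _⟩; exact hx
    have hpd : (↑(Finset.range (k+1)) : Set ℕ).PairwiseDisjoint
        (fun i => B ∩ (S (i+1) \ S i)) := by
      intro i hi j hj hij
      simp only [Finset.coe_range, Set.mem_Iio] at hi hj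
      simp only [Function.onFun]
      apply Finset.disjoint_left.mpr
      intro x hx hx'
      exact hdisj i j (by omega) (by omega) hij x (Finset.mem_inter.mp hx).2
        (Finset.mem_inter.mp hx').2
    calc ∑ x ∈ B, w x
        = ∑ i ∈ Finset.range (k+1), ∑ x ∈ B ∩ (S (i+1) \ S i), w x := by
          conv_lhs => rw [hBu]
          exact Finset.sum_biUnion hpd
      _ = ∑ i ∈ Finset.range (k+1),
            c i * (((B ∩ S (i+1)).card : ℝ) - ((B ∩ S i).card : ℝ)) := by
          apply Finset.sum_congr rfl
          intro i hi
          have hik : i ≤ k := by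
            have := Finset.mem_range.mp hi; omega
          have hconst : ∀ x ∈ B ∩ (S (i+1) \ S i), w x = c i :=
            fun x hx => hw i hik x (Finset.mem_inter.mp hx).2
          have hss : B ∩ S i ⊆ B ∩ S (i+1) :=
            Finset.inter_subset_inter subset_rfl (hchain (i+1) (by omega) i (by omega))
          have hsd : B ∩ (S (i+1) \ S i) = (B ∩ S (i+1)) \ (B ∩ S i) := by
            ext x; simp only [Finset.mem_inter, Finset.mem_sdiff]; tauto
          calc ∑ x ∈ B ∩ (S (i+1) \ S i), w x
              = ∑ _x ∈ B ∩ (S (i+1) \ S i), c i := Finset.sum_congr rfl hconst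
            _ = (B ∩ (S (i+1) \ S i)).card • c i := Finset.sum_const _
            _ = ((B ∩ (S (i+1) \ S i)).card : ℝ) * c i := nsmul_eq_mul _ _
            _ = c i * (((B ∩ S (i+1)).card : ℝ) - ((B ∩ S i).card : ℝ)) := by
                rw [hsd, Finset.card_sdiff_of_subset hss,
                  Nat.cast_sub (Finset.card_le_card hss)]
                ring
  -- main comparison
  have main : ∀ B B', B ⊆ E →
      (∀ i ≤ k, IsBasis (S (i+1) \ S i) (fun T => r (T ∪ S i) - r (S i))
        (B ∩ (S (i+1) \ S i))) →
      IsBasis E r B' →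
      (∑ x ∈ B, w x ≤ ∑ x ∈ B', w x) ∧
        (∑ x ∈ B', w x ≤ ∑ x ∈ B, w x →
          ∀ j, j ≤ k + 1 → ((B' ∩ S j).card : ℤ) = r (S j)) := by
    intro B B' hBE hC hB'
    have hB'E : B' ⊆ E := hB'.1
    have hf'le : ∀ j, j ≤ k+1 → ((B' ∩ S j).card : ℤ) ≤ r (S j) := by
      intro j hj
      have h1 : r (B' ∩ S j) = ((B' ∩ S j).card : ℤ) :=
        MWAux.indep_subset hr hB'E hB'.2.1 Finset.inter_subset_left
      have h2 := hr.2.1 (B' ∩ S j) (S j) Finset.inter_subset_right (hSE j hj)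
      omega
    have hf'0 : ((B' ∩ S 0).card : ℤ) = r (S 0) := by
      rw [hS0]; simp [MWAux.rank_empty hr]
    have hf'top : ((B' ∩ S (k+1)).card : ℤ) = r (S (k+1)) := by
      rw [hStop, Finset.inter_eq_left.mpr hB'E]
      have h1 := hB'.2.1; have h2 := hB'.2.2
      omega
    have hdiff : ∑ x ∈ B', w x - ∑ x ∈ B, w x =
        ∑ i ∈ Finset.range (k+1),
          (c (i+1) - c i) * ((r (S (i+1)) : ℝ) - ((B' ∩ S (i+1)).card : ℝ)) := by
      have habel := MWAux.abel_sum c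
        (fun i => (r (S i) : ℝ) - ((B' ∩ S i).card : ℝ)) (k+1)
      have h1 : ∑ x ∈ B', w x - ∑ x ∈ B, w x =
          ∑ i ∈ Finset.range (k+1),
            c i * (((r (S i) : ℝ) - ((B' ∩ S i).card : ℝ)) -
              ((r (S (i+1)) : ℝ) - ((B' ∩ S (i+1)).card : ℝ))) := by
        rw [stepB B hBE, stepB B' hB'E, ← Finset.sum_sub_distrib]
        apply Finset.sum_congr rfl
        intro i hi
        have hik : i < k + 1 := Finset.mem_range.mp hi
        have e1 : ((B ∩ S i).card : ℝ) = (r (S i) : ℝ) := by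
          exact_mod_cast (stepA B hBE hC i (by omega)).2
        have e2 : ((B ∩ S (i+1)).card : ℝ) = (r (S (i+1)) : ℝ) := by
          exact_mod_cast (stepA B hBE hC (i+1) (by omega)).2
        rw [e1, e2]; ring
      have z0 : (r (S 0) : ℝ) - ((B' ∩ S 0).card : ℝ) = 0 := by
        have : ((B' ∩ S 0).card : ℝ) = (r (S 0) : ℝ) := by exact_mod_cast hf'0
        linarith
      have ztop : (r (S (k+1)) : ℝ) - ((B' ∩ S (k+1)).card : ℝ) = 0 := by
        have : ((B' ∩ S (k+1)).card : ℝ) = (r (S (k+1)) : ℝ) := by exact_mod_cast hf'top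
        linarith
      rw [h1, habel, z0, ztop]
      ring
    have hnn : ∀ i ∈ Finset.range (k+1),
        0 ≤ (c (i+1) - c i) * ((r (S (i+1)) : ℝ) - ((B' ∩ S (i+1)).card : ℝ)) := by
      intro i hi
      have hik : i < k + 1 := Finset.mem_range.mp hi
      rcases Nat.lt_or_ge i k with h | h
      · apply mul_nonneg
        · have := hc i h; linarith
        · have h1 := hf'le (i+1) (by omega)
          have h2 : ((B' ∩ S (i+1)).card : ℝ) ≤ (r (S (i+1)) : ℝ) := by exact_mod_cast h1
          linarith
      · have hik' : i = k := by omega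
        rw [hik']
        have z : (r (S (k+1)) : ℝ) - ((B' ∩ S (k+1)).card : ℝ) = 0 := by
          have : ((B' ∩ S (k+1)).card : ℝ) = (r (S (k+1)) : ℝ) := by exact_mod_cast hf'top
          linarith
        rw [z, mul_zero]
    constructor
    · have := Finset.sum_nonneg hnn
      linarith
    · intro hge j hj
      have hsumz : ∑ i ∈ Finset.range (k+1),
          (c (i+1) - c i) * ((r (S (i+1)) : ℝ) - ((B' ∩ S (i+1)).card : ℝ)) = 0 := by
        have := Finset.sum_nonneg hnn
        linarith
      have hz := (Finset.sum_eq_zero_iff_of_nonneg hnn).mp hsumz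
      rcases Nat.eq_zero_or_pos j with rfl | hjpos
      · exact hf'0
      · rcases eq_or_lt_of_le hj with heq | hlt
        · rw [heq]; exact heq ▸ hf'top
        · have hjk : j ≤ k := by omega
          have hterm := hz (j-1) (Finset.mem_range.mpr (by omega))
          have hcj : c (j-1+1) - c (j-1) > 0 := by
            have := hc (j-1) (by omega); linarith
          have hj1 : j - 1 + 1 = j := by omega
          rw [hj1] at hterm hcj
          have hzero : ((B' ∩ S j).card : ℝ) = (r (S j) : ℝ) := by
            rcases mul_eq_zero.mp hterm with h | h
            · linarith
            · linarith
          exact_mod_cast hzero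
  -- Step D: basis with tight intersections satisfies the condition
  have stepD : ∀ B', IsBasis E r B' →
      (∀ j, j ≤ k + 1 → ((B' ∩ S j).card : ℤ) = r (S j)) →
      ∀ i ≤ k, IsBasis (S (i+1) \ S i) (fun T => r (T ∪ S i) - r (S i))
        (B' ∩ (S (i+1) \ S i)) := by
    intro B' hB' heq i hik
    have hB'E : B' ⊆ E := hB'.1
    have hind : ∀ j : ℕ, r (B' ∩ S j) = ((B' ∩ S j).card : ℤ) :=
      fun j => MWAux.indep_subset hr hB'E hB'.2.1 Finset.inter_subset_left
    have hXr : r (B' ∩ S i) = r (S i) := by rw [hind i, heq i (by omega)]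
    have hTE : B' ∩ (S (i+1) \ S i) ⊆ E := Finset.inter_subset_right.trans (hDE i hik)
    have e : r ((B' ∩ (S (i+1) \ S i)) ∪ (B' ∩ S i))
        = r ((B' ∩ (S (i+1) \ S i)) ∪ S i) :=
      MWAux.rank_union_congr hr Finset.inter_subset_right (hSE i (by omega)) hTE hXr
    have hset : (B' ∩ (S (i+1) \ S i)) ∪ (B' ∩ S i) = B' ∩ S (i+1) := by
      rw [← Finset.inter_union_distrib_left, hDu i hik]
    rw [hset] at e
    have hdisjc : Disjoint (B' ∩ (S (i+1) \ S i)) (B' ∩ S i) := by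
      apply Finset.disjoint_left.mpr
      intro x hx hx'
      exact (Finset.mem_sdiff.mp (Finset.mem_inter.mp hx).2).2 (Finset.mem_inter.mp hx').2
    have hcardeq : (B' ∩ S (i+1)).card
        = (B' ∩ (S (i+1) \ S i)).card + (B' ∩ S i).card := by
      rw [← hset]; exact Finset.card_union_of_disjoint hdisjc
    have hc1 : ((B' ∩ S (i+1)).card : ℤ)
        = ((B' ∩ (S (i+1) \ S i)).card : ℤ) + ((B' ∩ S i).card : ℤ) := by
      exact_mod_cast hcardeq
    refine ⟨Finset.inter_subset_right, ?_, ?_⟩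
    · show r ((B' ∩ (S (i+1) \ S i)) ∪ S i) - r (S i)
        = ((B' ∩ (S (i+1) \ S i)).card : ℤ)
      have h1 := hind (i+1)
      have h2 := heq (i+1) (by omega)
      have h3 := heq i (by omega)
      omega
    · show r ((B' ∩ (S (i+1) \ S i)) ∪ S i) - r (S i)
        = r ((S (i+1) \ S i) ∪ S i) - r (S i)
      rw [hDu i hik]
      have h1 := hind (i+1)
      have h2 := heq (i+1) (by omega)
      omega
  -- existence of a set satisfying the condition
  have hminor : ∀ i, i ≤ k →
      IsRankFn (S (i+1) \ S i) (fun T => r (T ∪ S i) - r (S i)) :=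
    fun i hi => MWAux.minor_rankFn hr (hSE i (by omega)) (hDE i hi)
  have hexT : ∀ i : ℕ, ∃ T, i ≤ k →
      IsBasis (S (i+1) \ S i) (fun T => r (T ∪ S i) - r (S i)) T := by
    intro i
    by_cases hi : i ≤ k
    · obtain ⟨T, hT⟩ := MWAux.exists_basis (hminor i hi)
      exact ⟨T, fun _ => hT⟩
    · exact ⟨∅, fun h => absurd h hi⟩
  choose T hT using hexT
  have hTD : ∀ i, i ≤ k → T i ⊆ S (i+1) \ S i := fun i hi => (hT i hi).1
  have hB₀E : (Finset.range (k+1)).biUnion T ⊆ E := by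
    intro x hx
    obtain ⟨i, hi, hxi⟩ := Finset.mem_biUnion.mp hx
    have hik : i ≤ k := by have := Finset.mem_range.mp hi; omega
    exact hDE i hik (hTD i hik hxi)
  have hB₀i : ∀ i, i ≤ k →
      (Finset.range (k+1)).biUnion T ∩ (S (i+1) \ S i) = T i := by
    intro i hik
    ext x
    simp only [Finset.mem_inter, Finset.mem_biUnion, Finset.mem_range]
    constructor
    · rintro ⟨⟨j, hj, hxj⟩, hxD⟩
      rcases eq_or_ne j i with rfl | hne
      · exact hxj
      · exact absurd hxD (hdisj j i (by omega) hik hne x (hTD j (by omega) hxj))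
    · intro hx
      exact ⟨⟨i, by omega, hx⟩, hTD i hik hx⟩
  have hCondB₀ : ∀ i ≤ k, IsBasis (S (i+1) \ S i) (fun T => r (T ∪ S i) - r (S i))
      ((Finset.range (k+1)).biUnion T ∩ (S (i+1) \ S i)) := by
    intro i hi
    rw [hB₀i i hi]
    exact hT i hi
  -- part 2
  have part2 : ∀ B ⊆ E,
      ((IsBasis E r B ∧ ∀ B', IsBasis E r B' → ∑ x ∈ B, w x ≤ ∑ x ∈ B', w x) ↔
        ∀ i ≤ k,
          IsBasis (S (i + 1) \ S i) (fun T => r (T ∪ S i) - r (S i))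
            (B ∩ (S (i + 1) \ S i))) := by
    intro B hBE
    constructor
    · rintro ⟨hBbasis, hmin⟩
      have hB₀basis := stepBasis _ hB₀E hCondB₀
      obtain ⟨hle0, heqc⟩ := main _ B hB₀E hCondB₀ hBbasis
      exact stepD B hBbasis (heqc (hmin _ hB₀basis))
    · intro hC
      have hBbasis := stepBasis B hBE hC
      exact ⟨hBbasis, fun B' hB' => (main B B' hBE hC hB').1⟩
  refine ⟨⟨⟨(Finset.range (k+1)).biUnion T, (part2 _ hB₀E).mpr hCondB₀⟩, ?_⟩, part2⟩
  -- exchange property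
  intro B₁ hB₁ B₂ hB₂ i hi
  have hB₁E : B₁ ⊆ E := hB₁.1.1
  have hB₂E : B₂ ⊆ E := hB₂.1.1
  have hC₁ := (part2 B₁ hB₁E).mp hB₁
  have hC₂ := (part2 B₂ hB₂E).mp hB₂
  obtain ⟨hiB₁, hiB₂⟩ := Finset.mem_sdiff.mp hi
  obtain ⟨t, htk, hit⟩ := hcover (k+1) le_rfl i (by rw [hStop]; exact hB₁E hiB₁)
  have hi' : i ∈ (B₁ ∩ (S (t+1) \ S t)) \ (B₂ ∩ (S (t+1) \ S t)) := by
    simp only [Finset.mem_sdiff, Finset.mem_inter]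
    exact ⟨⟨hiB₁, Finset.mem_sdiff.mp hit⟩, fun h => hiB₂ h.1⟩
  obtain ⟨j, hj, hjbasis⟩ :=
    MWAux.basis_exchange (hminor t htk) (hC₁ t htk) (hC₂ t htk) hi'
  obtain ⟨hjmem, hjnot⟩ := Finset.mem_sdiff.mp hj
  have hjB₂ : j ∈ B₂ := (Finset.mem_inter.mp hjmem).1
  have hjD : j ∈ S (t+1) \ S t := (Finset.mem_inter.mp hjmem).2
  have hjB₁ : j ∉ B₁ := fun h => hjnot (Finset.mem_inter.mpr ⟨h, hjD⟩)
  refine ⟨j, Finset.mem_sdiff.mpr ⟨hjB₂, hjB₁⟩, ?_⟩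
  have hBnE : insert j (B₁.erase i) ⊆ E :=
    Finset.insert_subset (hB₂E hjB₂) ((Finset.erase_subset i B₁).trans hB₁E)
  apply (part2 _ hBnE).mpr
  intro s hs
  rcases eq_or_ne s t with rfl | hne
  · have hBnt : insert j (B₁.erase i) ∩ (S (s+1) \ S s)
        = insert j ((B₁ ∩ (S (s+1) \ S s)).erase i) := by
      ext x
      simp only [Finset.mem_inter, Finset.mem_insert, Finset.mem_erase]
      constructor
      · rintro ⟨hx1, hx2⟩
        rcases hx1 with rfl | ⟨hxi, hxB⟩
        · exact Or.inl rfl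
        · exact Or.inr ⟨hxi, hxB, hx2⟩
      · rintro (rfl | ⟨hxi, hxB, hxD⟩)
        · exact ⟨Or.inl rfl, hjD⟩
        · exact ⟨Or.inr ⟨hxi, hxB⟩, hxD⟩
    rw [hBnt]
    exact hjbasis
  · have hiD : i ∉ S (s+1) \ S s := hdisj t s htk hs (Ne.symm hne) i hit
    have hjDs : j ∉ S (s+1) \ S s := hdisj t s htk hs (Ne.symm hne) j hjD
    have hBns : insert j (B₁.erase i) ∩ (S (s+1) \ S s) = B₁ ∩ (S (s+1) \ S s) := by
      ext x
      simp only [Finset.mem_inter, Finset.mem_insert, Finset.mem_erase]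
      constructor
      · rintro ⟨hx1, hx2⟩
        rcases hx1 with rfl | ⟨hxi, hxB⟩
        · exact absurd hx2 hjDs
        · exact ⟨hxB, hx2⟩
      · rintro ⟨hxB, hxD⟩
        refine ⟨Or.inr ⟨?_, hxB⟩, hxD⟩
        rintro rfl; exact hiD hxD
    rw [hBns]
    exact hC₁ s hs
end

section
/- Let M be a loopless matroid with lattice of flats L(M). Define the Möbius function by μ(∅,∅) = 1 and μ(∅,F) = −Σ_{∅ ⊆ F' ⊊ F} μ(∅,F') for flats F. Then for every flat F, Σ_{S ⊆ E, cl(S) = F} (−1)^{|S|} = μ(∅, F), where cl(S) is the smallest flat containing S. -/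
/-- The closure of `S` in the matroid on `E` with rank function `r`:
the set of elements whose addition does not increase the rank.  This is the
smallest flat containing `S`. -/
def clos {α : Type*} [DecidableEq α] (E : Finset α) (r : Finset α → ℤ)
    (S : Finset α) : Finset α :=
  E.filter (fun x => r (insert x S) = r S)

/-- `F` is a flat of the matroid on `E` with rank function `r`. -/
def IsFlat {α : Type*} [DecidableEq α] (E : Finset α) (r : Finset α → ℤ)
    (F : Finset α) : Prop :=
  F ⊆ E ∧ clos E r F = F

instance {α : Type*} [DecidableEq α] (E : Finset α) (r : Finset α → ℤ)
    (F : Finset α) : Decidable (IsFlat E r F) := by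
  unfold IsFlat; infer_instance

section Helpers
variable {α : Type*} [DecidableEq α] {E : Finset α} {r : Finset α → ℤ}

lemma clos_subset_E (S : Finset α) : clos E r S ⊆ E := Finset.filter_subset _ _

lemma subset_clos {S : Finset α} (hS : S ⊆ E) : S ⊆ clos E r S := by
  intro x hx
  simp only [clos, Finset.mem_filter]
  exact ⟨hS hx, by rw [Finset.insert_eq_self.2 hx]⟩

lemma r_union_clos (hr : IsRankFn E r) {S : Finset α} (hS : S ⊆ E) :
    ∀ D ⊆ clos E r S, r (S ∪ D) = r S := by
  obtain ⟨h0, hmono, hsub⟩ := hr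
  intro D hD
  induction D using Finset.induction_on with
  | empty => simp
  | @insert a D ha ih =>
    have haE : a ∈ clos E r S := hD (Finset.mem_insert_self _ _)
    have hDc : D ⊆ clos E r S := fun x hx => hD (Finset.mem_insert_of_mem hx)
    have hrD : r (S ∪ D) = r S := ih hDc
    have hra : r (insert a S) = r S := (Finset.mem_filter.1 haE).2
    have haE' : a ∈ E := (Finset.mem_filter.1 haE).1
    have hSD : S ∪ D ⊆ E := Finset.union_subset hS (hDc.trans (clos_subset_E S))
    have hins : insert a S ⊆ E := Finset.insert_subset haE' hS
    have key := hsub (S ∪ D) (insert a S) hSD hins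
    have h1 : (S ∪ D) ∪ insert a S = insert a (S ∪ D) := by
      ext x; simp only [Finset.mem_union, Finset.mem_insert]; tauto
    have h2 : S ⊆ (S ∪ D) ∩ insert a S := by
      intro x hx; simp [Finset.mem_inter, Finset.mem_union, Finset.mem_insert]; tauto
    have h3 : r S ≤ r ((S ∪ D) ∩ insert a S) :=
      hmono _ _ h2 ((Finset.inter_subset_right).trans hins)
    have h4 : r (S ∪ D) ≤ r (insert a (S ∪ D)) :=
      hmono _ _ (Finset.subset_insert _ _) (Finset.insert_subset haE' hSD)
    have : S ∪ insert a D = insert a (S ∪ D) := by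
      ext x; simp only [Finset.mem_union, Finset.mem_insert]; tauto
    rw [this]
    rw [h1] at key
    omega

lemma r_clos (hr : IsRankFn E r) {S : Finset α} (hS : S ⊆ E) :
    r (clos E r S) = r S := by
  have := r_union_clos hr hS (clos E r S) le_rfl
  rwa [Finset.union_eq_right.2 (subset_clos hS)] at this

lemma isFlat_clos (hr : IsRankFn E r) {S : Finset α} (hS : S ⊆ E) :
    clos E r (clos E r S) = clos E r S := by
  apply Finset.Subset.antisymm _ (subset_clos (clos_subset_E S))
  intro x hx
  obtain ⟨hxE, hxr⟩ := Finset.mem_filter.1 hx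
  have hrc := r_clos hr hS
  obtain ⟨h0, hmono, hsub⟩ := hr
  have h1 : r (insert x S) ≤ r (insert x (clos E r S)) :=
    hmono _ _ (Finset.insert_subset_insert _ (subset_clos hS))
      (Finset.insert_subset hxE (clos_subset_E S))
  have h2 : r S ≤ r (insert x S) :=
    hmono _ _ (Finset.subset_insert _ _) (Finset.insert_subset hxE hS)
  refine Finset.mem_filter.2 ⟨hxE, ?_⟩
  omega

lemma clos_subset_flat (hr : IsRankFn E r) {S F : Finset α} (hS : S ⊆ F)
    (hF : F ⊆ E ∧ clos E r F = F) : clos E r S ⊆ F := by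
  intro x hx
  obtain ⟨hxE, hxr⟩ := Finset.mem_filter.1 hx
  obtain ⟨h0, hmono, hsub⟩ := hr
  have hFE := hF.1
  have hSE := hS.trans hFE
  -- r (insert x F) = r F
  rw [← hF.2]
  refine Finset.mem_filter.2 ⟨hxE, ?_⟩
  by_cases hxF : x ∈ F
  · rw [Finset.insert_eq_self.2 hxF]
  · have key := hsub F (insert x S) hFE (Finset.insert_subset hxE hSE)
    have h1 : F ∪ insert x S = insert x F := by
      ext y; simp only [Finset.mem_union, Finset.mem_insert]; tauto
    have h2 : F ∩ insert x S = S := by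
      ext y; simp only [Finset.mem_inter, Finset.mem_insert]
      constructor
      · rintro ⟨hyF, hy | hy⟩
        · exact absurd (hy ▸ hyF) hxF
        · exact hy
      · intro hy; exact ⟨hS hy, Or.inr hy⟩
    rw [h1, h2, hxr] at key
    have h3 : r F ≤ r (insert x F) :=
      hmono _ _ (Finset.subset_insert _ _) (Finset.insert_subset hxE hFE)
    omega

theorem mobius_closure_sum' (hr : IsRankFn E r)
    (hloopless : clos E r ∅ = ∅)
    (mu : Finset α → ℤ)
    (hmu0 : mu ∅ = 1)
    (hmurec : ∀ F : Finset α, (F ⊆ E ∧ clos E r F = F) → F ≠ ∅ →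
      mu F = -∑ F' ∈ F.powerset.filter (fun F' => F' ≠ F ∧ (F' ⊆ E ∧ clos E r F' = F')), mu F') :
    ∀ F : Finset α, (F ⊆ E ∧ clos E r F = F) →
      ∑ S ∈ E.powerset.filter (fun S => clos E r S = F), (-1 : ℤ) ^ S.card = mu F := by
  -- first: the empty-flat case
  have hbase : ∑ S ∈ E.powerset.filter (fun S => clos E r S = ∅), (-1 : ℤ) ^ S.card = mu ∅ := by
    have : E.powerset.filter (fun S => clos E r S = ∅) = {∅} := by
      ext S
      simp only [Finset.mem_filter, Finset.mem_powerset, Finset.mem_singleton]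
      constructor
      · rintro ⟨hSE, hcl⟩
        have := subset_clos (E := E) (r := r) hSE
        rw [hcl] at this
        exact Finset.subset_empty.1 this
      · rintro rfl; exact ⟨Finset.empty_subset _, hloopless⟩
    rw [this, hmu0]; simp
  -- restrict the sum from E.powerset to F.powerset
  have hrestrict : ∀ F' F : Finset α, F' ⊆ F → F ⊆ E →
      E.powerset.filter (fun S => clos E r S = F') =
      F.powerset.filter (fun S => clos E r S = F') := by
    intro F' F hF'F hFE
    ext S
    simp only [Finset.mem_filter, Finset.mem_powerset]
    constructor
    · rintro ⟨hSE, hcl⟩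
      refine ⟨?_, hcl⟩
      exact (subset_clos (E := E) (r := r) hSE).trans (hcl ▸ hF'F)
    · rintro ⟨hSF, hcl⟩
      exact ⟨hSF.trans hFE, hcl⟩
  have main : ∀ n : ℕ, ∀ F : Finset α, F.card ≤ n → (F ⊆ E ∧ clos E r F = F) →
      ∑ S ∈ E.powerset.filter (fun S => clos E r S = F), (-1 : ℤ) ^ S.card = mu F := by
    intro n
    induction n with
    | zero =>
      intro F hcard hF
      have : F = ∅ := Finset.card_eq_zero.1 (Nat.le_zero.1 hcard)
      subst this; exact hbase
    | succ n ih =>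
      intro F hcard hF
      by_cases hFne : F = ∅
      · subst hFne; exact hbase
      -- fiberwise partition of F.powerset by closure
      have hmaps : ∀ S ∈ F.powerset, clos E r S ∈
          F.powerset.filter (fun F' => F' ⊆ E ∧ clos E r F' = F') := by
        intro S hS
        rw [Finset.mem_powerset] at hS
        have hSE : S ⊆ E := hS.trans hF.1
        refine Finset.mem_filter.2 ⟨Finset.mem_powerset.2 (clos_subset_flat hr hS hF),
          clos_subset_E S, isFlat_clos hr hSE⟩
      have hfib := Finset.sum_fiberwise_of_maps_to hmaps (fun S => (-1 : ℤ) ^ S.card)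
      have hzero : ∑ S ∈ F.powerset, (-1 : ℤ) ^ S.card = 0 := by
        rw [Finset.sum_powerset_neg_one_pow_card, if_neg hFne]
      rw [hzero] at hfib
      -- split off the F' = F term
      have hFmem : F ∈ F.powerset.filter (fun F' => F' ⊆ E ∧ clos E r F' = F') :=
        Finset.mem_filter.2 ⟨Finset.mem_powerset.2 le_rfl, hF⟩
      rw [← Finset.add_sum_erase _ _ hFmem] at hfib
      -- identify the erase set with the strict-flats filter
      have herase : (F.powerset.filter (fun F' => F' ⊆ E ∧ clos E r F' = F')).erase F =
          F.powerset.filter (fun F' => F' ≠ F ∧ (F' ⊆ E ∧ clos E r F' = F')) := by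
        ext F'
        simp only [Finset.mem_erase, Finset.mem_filter]
        tauto
      rw [herase] at hfib
      -- inner sums over erased flats equal mu by IH
      have hinner : ∀ F' ∈ F.powerset.filter (fun F' => F' ≠ F ∧ (F' ⊆ E ∧ clos E r F' = F')),
          ∑ S ∈ F.powerset.filter (fun S => clos E r S = F'), (-1 : ℤ) ^ S.card = mu F' := by
        intro F' hF'
        obtain ⟨hF'pow, hne, hflat⟩ := Finset.mem_filter.1 hF'
        rw [Finset.mem_powerset] at hF'pow
        rw [← hrestrict F' F hF'pow hF.1]
        refine ih F' ?_ hflat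
        have : F'.card < F.card := Finset.card_lt_card (lt_of_le_of_ne hF'pow hne)
        omega
      rw [Finset.sum_congr rfl hinner] at hfib
      rw [hrestrict F F le_rfl hF.1]
      have := hmurec F hF hFne
      linarith [hfib]
  intro F hF
  exact main F.card F le_rfl hF

end Helpers

/-- For a loopless matroid `M` with Möbius function `μ` of its lattice of flats
(defined by `μ(∅,∅) = 1` and `μ(∅,F) = -∑_{F' ⊊ F flat} μ(∅,F')`), every flat `F`
satisfies `∑_{S ⊆ E, cl(S) = F} (-1)^{|S|} = μ(∅,F)`. -/
theorem mobius_closure_sum {α : Type*} [DecidableEq α] (E : Finset α)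
    (r : Finset α → ℤ) (hr : IsRankFn E r)
    (hloopless : clos E r ∅ = ∅)
    (mu : Finset α → ℤ)
    (hmu0 : mu ∅ = 1)
    (hmurec : ∀ F : Finset α, IsFlat E r F → F ≠ ∅ →
      mu F = -∑ F' ∈ F.powerset.filter (fun F' => F' ≠ F ∧ IsFlat E r F'), mu F') :
    ∀ F : Finset α, IsFlat E r F →
      ∑ S ∈ E.powerset.filter (fun S => clos E r S = F), (-1 : ℤ) ^ S.card = mu F := by
  simp only [IsFlat] at hmurec ⊢
  exact mobius_closure_sum' hr hloopless mu hmu0 hmurec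
end

section
/- The Tutte polynomial T_M(x,y) = Σ_{S⊆E} (x−1)^{r(E)−r(S)} (y−1)^{|S|−r(S)} satisfies: T_M(x,y) = T_{M\i}(x,y) + T_{M/i}(x,y) whenever i ∈ E is neither a loop nor a coloop, T_{M₁⊕M₂} = T_{M₁}·T_{M₂}, T_{U_{1,1}}(x,y) = x, and T_{U_{0,1}}(x,y) = y. -/
/-- The Tutte polynomial
`T_M(x,y) = ∑_{S ⊆ E} (x-1)^{r(E) - r(S)} (y-1)^{|S| - r(S)}`. -/
def tutte {α : Type*} [DecidableEq α] (E : Finset α) (r : Finset α → ℤ)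
    (x y : ℤ) : ℤ :=
  ∑ S ∈ E.powerset,
    (x - 1) ^ (r E - r S).toNat * (y - 1) ^ ((S.card : ℤ) - r S).toNat

/-- The Tutte polynomial satisfies: deletion–contraction
`T_M = T_{M∖i} + T_{M/i}` when `i` is neither a loop nor a coloop,
multiplicativity over direct sums, `T_{U_{1,1}}(x,y) = x` (a coloop), and
`T_{U_{0,1}}(x,y) = y` (a loop). -/
theorem tutte_properties {α : Type*} [DecidableEq α] :
    (∀ (E : Finset α) (r : Finset α → ℤ) (x y : ℤ), IsRankFn E r →
      ∀ i ∈ E, r {i} ≠ 0 → r (E.erase i) = r E →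
        tutte E r x y =
          tutte (E.erase i) r x y +
            tutte (E.erase i) (fun S => r (insert i S) - r {i}) x y) ∧
    (∀ (E₁ E₂ : Finset α) (r₁ r₂ : Finset α → ℤ) (x y : ℤ),
      IsRankFn E₁ r₁ → IsRankFn E₂ r₂ → Disjoint E₁ E₂ →
        tutte (E₁ ∪ E₂) (fun S => r₁ (S ∩ E₁) + r₂ (S ∩ E₂)) x y =
          tutte E₁ r₁ x y * tutte E₂ r₂ x y) ∧
    (∀ (i : α) (x y : ℤ), tutte {i} (fun S => (S.card : ℤ)) x y = x) ∧
    (∀ (i : α) (x y : ℤ), tutte {i} (fun _ => 0) x y = y) := by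
  refine ⟨?_, ?_, ?_, ?_⟩
  · -- deletion–contraction
    intro E r x y hr i hi hni hd
    have hri : r {i} = 1 := by
      have h1 := hr.1 {i} (by simpa using hi)
      simp only [Finset.card_singleton] at h1
      omega
    have hie : i ∉ E.erase i := Finset.notMem_erase i E
    have hins : insert i (E.erase i) = E := Finset.insert_erase hi
    rw [tutte, tutte, tutte]
    rw [show E.powerset = (insert i (E.erase i)).powerset by rw [hins]]
    rw [Finset.sum_powerset_insert hie]
    congr 1
    · apply Finset.sum_congr rfl
      intro S hS
      rw [hd]
    · apply Finset.sum_congr rfl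
      intro S hS
      have hiS : i ∉ S := fun h => hie (Finset.mem_powerset.1 hS h)
      simp only [hins, Finset.card_insert_of_notMem hiS]
      congr 2 <;> push_cast <;> omega
  · -- direct sum
    intro E₁ E₂ r₁ r₂ x y h1 h2 hdis
    rw [tutte, tutte, tutte, Finset.sum_mul_sum]
    have hE1 : (E₁ ∪ E₂) ∩ E₁ = E₁ := Finset.union_inter_cancel_left
    have hE2 : (E₁ ∪ E₂) ∩ E₂ = E₂ := Finset.union_inter_cancel_right
    rw [← Finset.sum_product']
    refine Finset.sum_bij' (fun S _ => (S ∩ E₁, S ∩ E₂)) (fun p _ => p.1 ∪ p.2)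
      ?_ ?_ ?_ ?_ ?_
    · intro S hS
      simp only [Finset.mem_product, Finset.mem_powerset] at *
      exact ⟨Finset.inter_subset_right, Finset.inter_subset_right⟩
    · intro p hp
      simp only [Finset.mem_product, Finset.mem_powerset] at hp
      simp only [Finset.mem_powerset]
      exact Finset.union_subset (hp.1.trans Finset.subset_union_left)
        (hp.2.trans Finset.subset_union_right)
    · intro S hS
      simp only [Finset.mem_powerset] at hS
      show S ∩ E₁ ∪ S ∩ E₂ = S
      rw [← Finset.inter_union_distrib_left, Finset.inter_eq_left.2 hS]
    · intro p hp
      simp only [Finset.mem_product, Finset.mem_powerset] at hp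
      have d1 : p.2 ∩ E₁ = ∅ := Finset.disjoint_iff_inter_eq_empty.1
        (Finset.disjoint_of_subset_left hp.2 hdis.symm)
      have d2 : p.1 ∩ E₂ = ∅ := Finset.disjoint_iff_inter_eq_empty.1
        (Finset.disjoint_of_subset_left hp.1 hdis)
      have e1 : (p.1 ∪ p.2) ∩ E₁ = p.1 := by
        rw [Finset.union_inter_distrib_right, Finset.inter_eq_left.2 hp.1, d1,
          Finset.union_empty]
      have e2 : (p.1 ∪ p.2) ∩ E₂ = p.2 := by
        rw [Finset.union_inter_distrib_right, d2, Finset.empty_union,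
          Finset.inter_eq_left.2 hp.2]
      show ((p.1 ∪ p.2) ∩ E₁, (p.1 ∪ p.2) ∩ E₂) = p
      rw [e1, e2]
    · intro S hS
      simp only [Finset.mem_powerset] at hS
      have hA : S ∩ E₁ ⊆ E₁ := Finset.inter_subset_right
      have hB : S ∩ E₂ ⊆ E₂ := Finset.inter_subset_right
      have hcard : S.card = (S ∩ E₁).card + (S ∩ E₂).card := by
        rw [← Finset.card_union_of_disjoint
          (Finset.disjoint_of_subset_left hA (Finset.disjoint_of_subset_right hB hdis)),
          ← Finset.inter_union_distrib_left, Finset.inter_eq_left.2 hS]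
      have m1 : r₁ (S ∩ E₁) ≤ r₁ E₁ := h1.2.1 _ _ hA (subset_refl _)
      have m2 : r₂ (S ∩ E₂) ≤ r₂ E₂ := h2.2.1 _ _ hB (subset_refl _)
      have b1 := h1.1 _ hA
      have b2 := h2.1 _ hB
      rw [hE1, hE2]
      have ex1 : (r₁ E₁ + r₂ E₂ - (r₁ (S ∩ E₁) + r₂ (S ∩ E₂))).toNat
          = (r₁ E₁ - r₁ (S ∩ E₁)).toNat + (r₂ E₂ - r₂ (S ∩ E₂)).toNat := by omega
      have ex2 : ((S.card : ℤ) - (r₁ (S ∩ E₁) + r₂ (S ∩ E₂))).toNat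
          = (((S ∩ E₁).card : ℤ) - r₁ (S ∩ E₁)).toNat
            + (((S ∩ E₂).card : ℤ) - r₂ (S ∩ E₂)).toNat := by
        have : (S.card : ℤ) = ((S ∩ E₁).card : ℤ) + ((S ∩ E₂).card : ℤ) := by
          exact_mod_cast congrArg Nat.cast hcard
        omega
      rw [ex1, ex2, pow_add, pow_add]
      ring
  · intro i x y
    rw [tutte, show ({i} : Finset α) = insert i ∅ from rfl,
      Finset.sum_powerset_insert (Finset.notMem_empty i)]
    simp
  · intro i x y
    rw [tutte, show ({i} : Finset α) = insert i ∅ from rfl,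
      Finset.sum_powerset_insert (Finset.notMem_empty i)]
    simp
end
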